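/- Let Z be a real vector space, 𝓐, 𝓑 : Z → Set Z set-valued mappings, α, γ real numbers with α ≠ −1, and set τ = γ/(1 + α). For any ū, v₁, v₂, v₃ ∈ Z, the following are equivalent: (i) there exist a ∈ 𝓐(v₁) and b ∈ 𝓑(v₃) such that (v₁ + v₂ + v₃) + α·v₁ + γ·a − v₂ − v₃ = ū, (v₁ + v₂ + v₃) + v₁ − v₃ = ū, and (v₁ + v₂ + v₃) + (1 − 2α)·v₁ + v₂ + α·v₃ + γ·b = ū; (ii) there exists a ∈ 𝓐(v₁) with v₁ + τ·a = (1/(1+α))·ū, v₂ = ū − 2·v₁, and there exists b ∈ 𝓑(v₃) with v₃ + τ·b = 2·v₁ − (1/(1+α))·ū. -/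

import Mathlib

/-!
Dividing the first and third rows of the inclusion by `1 + α` turns them into the resolvent
equations `v + τ • a = w`, `a ∈ 𝓐 v`, while the middle row, which involves no operator, just
fixes `v₂ = ū − 2v₁`; substituting it into the third row leaves `(1 + α) v₃ + γ b = 2(1 + α) v₁ − ū`.
-/

theorem add_div_smul_eq_one_div_smul_iff {K V : Type*} [Field K] [AddCommGroup V] [Module K V]
    {c : K} (hc : c ≠ 0) (γ : K) (x a y : V) :
    x + (γ / c) • a = (1 / c) • y ↔ c • x + γ • a = y := by
  have hscale : x + (γ / c) • a = (1 / c) • (c • x + γ • a) := by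
    match_scalars <;> field_simp
  rw [hscale, smul_right_inj (one_div_ne_zero hc)]

theorem preconditioned_rows_iff {R V : Type*} [CommRing R] [AddCommGroup V] [Module R V]
    (α γ : R) (u v₁ v₂ v₃ a b : V) :
    ((v₁ + v₂ + v₃) + α • v₁ + γ • a - v₂ - v₃ = u ∧
        (v₁ + v₂ + v₃) + v₁ - v₃ = u ∧
        (v₁ + v₂ + v₃) + (1 - 2 * α) • v₁ + v₂ + α • v₃ + γ • b = u) ↔
      ((1 + α) • v₁ + γ • a = u ∧
        v₂ = u - (2 : R) • v₁ ∧
        (1 + α) • v₃ + γ • b = (2 * (1 + α)) • v₁ - u) := by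
  constructor
  · rintro ⟨row₁, row₂, row₃⟩
    refine ⟨?_, ?_, ?_⟩
    · linear_combination (norm := module) row₁
    · linear_combination (norm := module) row₂
    · linear_combination (norm := module) row₃ - (2 : R) • row₂
  · rintro ⟨row₁, hv₂, row₃⟩
    refine ⟨?_, ?_, ?_⟩
    · linear_combination (norm := module) row₁
    · linear_combination (norm := module) hv₂
    · linear_combination (norm := module) row₃ + (2 : R) • hv₂

theorem preconditioner_resolvent_characterization
    {Z : Type*} [AddCommGroup Z] [Module ℝ Z]
    (𝓐 𝓑 : Z → Set Z) (α γ : ℝ) (hα : α ≠ -1) (τ : ℝ) (hτ : τ = γ / (1 + α))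
    (ub v₁ v₂ v₃ : Z) :
    (∃ a ∈ 𝓐 v₁, ∃ b ∈ 𝓑 v₃,
        (v₁ + v₂ + v₃) + α • v₁ + γ • a - v₂ - v₃ = ub ∧
        (v₁ + v₂ + v₃) + v₁ - v₃ = ub ∧
        (v₁ + v₂ + v₃) + (1 - 2 * α) • v₁ + v₂ + α • v₃ + γ • b = ub) ↔
      ((∃ a ∈ 𝓐 v₁, v₁ + τ • a = (1 / (1 + α)) • ub) ∧
        v₂ = ub - (2 : ℝ) • v₁ ∧
        (∃ b ∈ 𝓑 v₃, v₃ + τ • b = (2 : ℝ) • v₁ - (1 / (1 + α)) • ub)) := by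
  have hc : 1 + α ≠ 0 := fun h => hα (by linarith)
  have hrhs : (2 : ℝ) • v₁ - (1 / (1 + α)) • ub = (1 / (1 + α)) • ((2 * (1 + α)) • v₁ - ub) := by
    match_scalars <;> field_simp
  subst hτ
  simp only [preconditioned_rows_iff, hrhs, add_div_smul_eq_one_div_smul_iff hc]
  constructor
  · rintro ⟨a, ha, b, hb, row₁, hv₂, row₃⟩
    exact ⟨⟨a, ha, row₁⟩, hv₂, b, hb, row₃⟩
  · rintro ⟨⟨a, ha, row₁⟩, hv₂, b, hb, row₃⟩
    exact ⟨a, ha, b, hb, row₁, hv₂, row₃⟩
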